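/- For every integer n > 1, C_1(n) := Σ_{k=1}^{n} (−1)^(k−1) · [2n, n−k] · k equals (−1)^n · (2n+1)/(8(n−1)) + [2n, n] · (2n−1)/(8(n−1)). -/

import Mathlib

open Finset

/-- Rising factorial `(x)_n = x(x+1)⋯(x+n-1)`. -/
noncomputable def rfact (x : ℝ) : ℕ → ℝ
  | 0 => 1
  | n + 1 => rfact x n * (x + n)

/-- The bracket coefficient `[n, k] = (1/2)_n / ((1/2)_k (1/2)_{n-k})`. -/
noncomputable def brkt (n k : ℕ) : ℝ :=
  rfact (1 / 2) n / (rfact (1 / 2) k * rfact (1 / 2) (n - k))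

/-!
The summand is hypergeometric in `k`, since `[N, j+1] (j + 1/2) = [N, j] (N - j - 1/2)`.
Gosper's algorithm therefore finds an antidifference of the shape `(-1)^k [2n, n-k] R(k)` with
`R` quadratic, and `8(n-1)` times the sum over `k < n` telescopes to its two boundary values;
adding the last term `k = n` gives the closed form.
-/

lemma Finset.sum_Icc_one_eq_sum_range_add {M : Type*} [AddCommMonoid M] {f : ℕ → M}
    (hf : f 0 = 0) (n : ℕ) : ∑ k ∈ Icc 1 n, f k = ∑ k ∈ range n, f k + f n := by
  rw [← sum_range_succ, Nat.range_succ_eq_Icc_zero, ← insert_Icc_add_one_left_eq_Icc n.zero_le,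
    sum_insert (by simp), hf, zero_add, zero_add]

lemma neg_one_pow_sub_one_mul_cast {R : Type*} [Ring R] (k : ℕ) :
    (-1 : R) ^ (k - 1) * k = -((-1) ^ k * k) := by
  cases k with
  | zero => simp
  | succ k => simp [pow_succ]

lemma rfact_pos {x : ℝ} (hx : 0 < x) (m : ℕ) : 0 < rfact x m := by
  induction m with
  | zero => simp [rfact]
  | succ m ih => rw [rfact]; positivity

lemma brkt_zero (N : ℕ) : brkt N 0 = 1 := by
  simp only [brkt, rfact, one_mul, Nat.sub_zero]
  exact div_self (rfact_pos one_half_pos N).ne'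

lemma brkt_succ_mul {N j : ℕ} (h : j < N) :
    brkt N (j + 1) * (j + 1 / 2) = brkt N j * (N - j - 1 / 2) := by
  obtain ⟨m, rfl⟩ := Nat.exists_eq_add_of_lt h
  have hsub : j + m + 1 - j = m + 1 := by omega
  have hsub' : j + m + 1 - (j + 1) = m := by omega
  have := rfact_pos one_half_pos j
  have := rfact_pos one_half_pos m
  simp only [brkt, hsub, hsub', rfact]
  field_simp
  push_cast
  ring

noncomputable def cOnePotential (n k : ℕ) : ℝ :=
  (-1) ^ k * brkt (2 * n) (n - k) * (4 * k ^ 2 + 4 * (n - 1) * k - (2 * n - 1))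

lemma cOnePotential_succ_sub {n k : ℕ} (hk : k < n) :
    cOnePotential n (k + 1) - cOnePotential n k =
      8 * ((n : ℝ) - 1) * ((-1) ^ (k - 1) * brkt (2 * n) (n - k) * k) := by
  obtain ⟨m, rfl⟩ := Nat.exists_eq_add_of_lt hk
  have hrec := brkt_succ_mul (N := 2 * (k + m + 1)) (j := m) (by omega)
  have h1 : k + m + 1 - (k + 1) = m := by omega
  have h2 : k + m + 1 - k = m + 1 := by omega
  have hpos : (0 : ℝ) < 2 * (k + m + 1) - m - 1 / 2 := by
    have : (0 : ℝ) ≤ k := k.cast_nonneg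
    linarith
  have hsign := neg_one_pow_sub_one_mul_cast (R := ℝ) k
  simp only [cOnePotential, h1, h2, pow_succ]
  push_cast at hrec ⊢
  refine mul_left_cancel₀ hpos.ne' ?_
  linear_combination
    (-1) ^ k * (4 * ((k : ℝ) + 1) ^ 2 + 4 * (k + m) * (k + 1) - (2 * (k + m + 1) - 1)) * hrec -
      8 * ((k : ℝ) + m) * brkt (2 * (k + m + 1)) (m + 1) * (2 * (k + m + 1) - m - 1 / 2) * hsign

theorem C_one_eval (n : ℕ) (hn : 1 < n) :
    ∑ k ∈ Finset.Icc 1 n, (-1 : ℝ) ^ (k - 1) * brkt (2 * n) (n - k) * (k : ℝ) =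
      (-1 : ℝ) ^ n * (2 * (n : ℝ) + 1) / (8 * ((n : ℝ) - 1)) +
        brkt (2 * n) n * (2 * (n : ℝ) - 1) / (8 * ((n : ℝ) - 1)) := by
  have hden : 8 * ((n : ℝ) - 1) ≠ 0 :=
    mul_ne_zero (by norm_num) (sub_ne_zero.2 (by exact_mod_cast hn.ne'))
  have htel : 8 * ((n : ℝ) - 1) * ∑ k ∈ range n, (-1 : ℝ) ^ (k - 1) * brkt (2 * n) (n - k) * k =
      cOnePotential n n - cOnePotential n 0 := by
    rw [mul_sum, ← sum_range_sub]
    exact sum_congr rfl fun k hk => (cOnePotential_succ_sub (mem_range.1 hk)).symm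
  simp only [cOnePotential, Nat.sub_self, Nat.sub_zero, brkt_zero, pow_zero] at htel
  rw [sum_Icc_one_eq_sum_range_add (by simp), Nat.sub_self, brkt_zero, mul_one,
    neg_one_pow_sub_one_mul_cast, ← add_div, eq_div_iff hden]
  linear_combination htel
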